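/- Let p, q be coprime positive integers with p/q < 1/3. Label a set of q points as x_1, ..., x_{q−2p} (on branch b_1), y_1, ..., y_p (on branch b_2), and z_1, ..., z_p (on branch b_3). Define σ by: σ(x_i) = x_{i+p} for 1 ≤ i ≤ q−3p; σ(x_{q−3p+i}) = y_i for 1 ≤ i ≤ p; σ(y_i) = z_i for 1 ≤ i ≤ p; σ(z_i) = x_i for 1 ≤ i ≤ p. Then σ is a cyclic permutation of all q points (a single q-cycle), and its rotation number (average displacement, where x-to-x steps contribute 0 and each branch-advancing step contributes 1/3) equals p/q. -/

import Mathlib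

/-- The combinatorial model of the unimodal triod-rot-twist of rotation number
`p/q < 1/3`, on points indexed `0, …, q−1`:
indices `0, …, q−2p−1` are the points `x_1, …, x_{q−2p}` on branch `b₁`,
indices `q−2p, …, q−p−1` are `y_1, …, y_p` on branch `b₂`, and
indices `q−p, …, q−1` are `z_1, …, z_p` on branch `b₃`.
`σ(x_i) = x_{i+p}` for `1 ≤ i ≤ q−3p`; `σ(x_{q−3p+i}) = y_i`, `σ(y_i) = z_i`,
`σ(z_i) = x_i` for `1 ≤ i ≤ p`. -/
def sigLow (p q i : ℕ) : ℕ :=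
  if i < q - 3 * p then i + p
  else if i < q - 2 * p then (i - (q - 3 * p)) + (q - 2 * p)
  else if i < q - p then i + p
  else i - (q - p)

/-- Displacement of a step of `sigLow`: `0` for a step staying among the `x`'s,
`1/3` for each branch-advancing step. -/
def dispLow (p q i : ℕ) : ℚ :=
  if i < q - 2 * p ∧ sigLow p q i < q - 2 * p then 0 else 1/3

/-!
On `{0, …, q−1}` the map `σ` is the rotation `i ↦ i + p mod q`: the branches are laid out
consecutively, so sending the last `p` of the `x`'s to the `y`'s, the `y`'s to the `z`'s and the
`z`'s back to the first `p` of the `x`'s all amount to adding `p`, the last step wrapping around.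
Hence `σⁿ i = i + n p mod q`, which reaches every residue because `p` is a unit mod `q`.
A step advances a branch exactly when it starts at one of the last `3p` points, so the total
displacement is `3p · 1/3 = p`.
-/

lemma three_mul_lt_of_div_lt_third {p q : ℕ} (hq : 0 < q) (h : (p : ℚ) / q < 1 / 3) :
    3 * p < q := by
  rw [div_lt_div_iff₀ (by exact_mod_cast hq) (by norm_num)] at h
  exact_mod_cast (by linarith : (3 * p : ℚ) < q)

lemma Nat.exists_add_mul_mod_eq {p q : ℕ} (hq : 0 < q) (hcop : p.Coprime q) (i j : ℕ) :
    ∃ n, (i + n * p) % q = j % q := by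
  have : NeZero q := ⟨hq.ne'⟩
  set u := ZMod.unitOfCoprime p hcop
  refine ⟨(((j : ZMod q) - i) * ↑u⁻¹).val, ?_⟩
  rw [← ZMod.natCast_eq_natCast_iff']
  push_cast
  rw [ZMod.natCast_val, ZMod.cast_id, mul_assoc, ← ZMod.coe_unitOfCoprime p hcop, u.inv_mul]
  ring

section

variable {p q : ℕ}

lemma sigLow_eq_add_mod (h3q : 3 * p < q) {i : ℕ} (hi : i < q) :
    sigLow p q i = (i + p) % q := by
  unfold sigLow
  rcases lt_or_ge (i + p) q with h | h
  · rw [Nat.mod_eq_of_lt h]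
    split_ifs <;> omega
  · rw [Nat.mod_eq_sub_mod h, Nat.mod_eq_of_lt (by omega)]
    split_ifs <;> omega

lemma sigLow_iterate (h3q : 3 * p < q) (n : ℕ) {i : ℕ} (hi : i < q) :
    (sigLow p q)^[n] i = (i + n * p) % q := by
  induction n with
  | zero => simp [Nat.mod_eq_of_lt hi]
  | succ n ih =>
    rw [Function.iterate_succ_apply', ih, sigLow_eq_add_mod h3q (Nat.mod_lt _ (by omega)),
      Nat.mod_add_mod, add_one_mul, add_assoc]

lemma bijOn_sigLow (h3q : 3 * p < q) :
    Set.BijOn (sigLow p q) {i | i < q} {i | i < q} := by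
  have hmaps : Set.MapsTo (sigLow p q) {i | i < q} {i | i < q} := fun i hi => by
    rw [Set.mem_ofPred_eq, sigLow_eq_add_mod h3q hi]
    exact Nat.mod_lt _ (by omega)
  refine ((Set.finite_lt_nat q).injOn_iff_bijOn_of_mapsTo hmaps).mp fun i hi j hj h => ?_
  rw [sigLow_eq_add_mod h3q hi, sigLow_eq_add_mod h3q hj] at h
  exact (Nat.ModEq.add_right_cancel' p h).eq_of_lt_of_lt hi hj

lemma exists_sigLow_iterate_eq (h3q : 3 * p < q) (hcop : p.Coprime q)
    {i j : ℕ} (hi : i < q) (hj : j < q) : ∃ n, (sigLow p q)^[n] i = j := by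
  obtain ⟨n, hn⟩ := Nat.exists_add_mul_mod_eq (by omega) hcop i j
  exact ⟨n, by rw [sigLow_iterate h3q n hi, hn, Nat.mod_eq_of_lt hj]⟩

lemma dispLow_eq_ite (h3q : 3 * p < q) {i : ℕ} (hi : i < q) :
    dispLow p q i = if i < q - 3 * p then 0 else 1 / 3 := by
  unfold dispLow
  rw [sigLow_eq_add_mod h3q hi]
  by_cases h : i < q - 3 * p
  · rw [if_pos ⟨by omega, by rw [Nat.mod_eq_of_lt (by omega)]; omega⟩, if_pos h]
  · rw [if_neg, if_neg h]
    rintro ⟨h1, h2⟩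
    rw [Nat.mod_eq_of_lt (by omega)] at h2
    omega

lemma sum_dispLow (h3q : 3 * p < q) : ∑ i ∈ Finset.range q, dispLow p q i = p := by
  rw [Finset.sum_congr rfl fun i hi => dispLow_eq_ite h3q (Finset.mem_range.mp hi),
    ← Finset.sum_range_add_sum_Ico _ (Nat.sub_le q (3 * p)),
    Finset.sum_congr rfl fun i hi => if_pos (Finset.mem_range.mp hi),
    Finset.sum_congr rfl fun i hi => if_neg (Finset.mem_Ico.mp hi).1.not_gt,
    Finset.sum_const_zero, Finset.sum_const, Nat.card_Ico, Nat.sub_sub_self h3q.le, nsmul_eq_mul]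
  push_cast
  ring

end

theorem stmt8_general (p q : ℕ) (hq : 0 < q) (hcop : Nat.Coprime p q)
    (h3 : (p : ℚ) / q < 1/3) :
    Set.BijOn (sigLow p q) {i : ℕ | i < q} {i : ℕ | i < q} ∧
    (∀ i < q, ∀ j < q, ∃ n : ℕ, (sigLow p q)^[n] i = j) ∧
    (∑ i ∈ Finset.range q, dispLow p q i) / q = (p : ℚ) / q := by
  have h3q := three_mul_lt_of_div_lt_third hq h3
  exact ⟨bijOn_sigLow h3q, fun i hi j hj => exists_sigLow_iterate_eq h3q hcop hi hj,
    by rw [sum_dispLow h3q]⟩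

/-- for coprime positive `p, q` with `p/q < 1/3`, the map `σ` above is a
bijection of `{0, …, q−1}` forming a single `q`-cycle, and its rotation number
(average displacement) equals `p/q`. -/
theorem stmt8 (p q : ℕ) (hp : 0 < p) (hq : 0 < q) (hcop : Nat.Coprime p q)
    (h3 : (p : ℚ) / q < 1/3) :
    Set.BijOn (sigLow p q) {i : ℕ | i < q} {i : ℕ | i < q} ∧
    (∀ i < q, ∀ j < q, ∃ n : ℕ, (sigLow p q)^[n] i = j) ∧
    (∑ i ∈ Finset.range q, dispLow p q i) / q = (p : ℚ) / q :=
  stmt8_general p q hq hcop h3
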